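/- arXiv:1107.2635 — 8 statements merged into one kernel-verified Lean document; each statement's English description precedes it below -/
import Mathlib

section
/- Every zero game is a win for the Unknotter moving second (i.e., every zero game is U2). -/
/-- Resolve crossing `i` of a position with `n+1` unresolved crossings with value `b`. -/
def opt {n : ℕ} (i : Fin (n + 1)) (b : Bool)
    (f : (Fin (n + 1) → Bool) → Bool) : (Fin n → Bool) → Bool :=
  fun g => f (i.insertNth b g)

/-- The Unknotter has a winning strategy; `myTurn = true` means it is the Unknotter's move. -/
def Uwins : (n : ℕ) → ((Fin n → Bool) → Bool) → Bool → Prop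
  | 0, f, _ => f (fun i => i.elim0) = true
  | n + 1, f, true => ∃ (i : Fin (n + 1)) (b : Bool), Uwins n (opt i b f) false
  | n + 1, f, false => ∀ (i : Fin (n + 1)) (b : Bool), Uwins n (opt i b f) true

/-- The Knotter has a winning strategy; `myTurn = true` means it is the Knotter's move. -/
def Kwins : (n : ℕ) → ((Fin n → Bool) → Bool) → Bool → Prop
  | 0, f, _ => f (fun i => i.elim0) = false
  | n + 1, f, true => ∃ (i : Fin (n + 1)) (b : Bool), Kwins n (opt i b f) false
  | n + 1, f, false => ∀ (i : Fin (n + 1)) (b : Bool), Kwins n (opt i b f) true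

/-- Zero game: `P` is a first-player win for the Unknotter, and every option of `P`
has an option which is a zero game. -/
def ZeroGame : (n : ℕ) → ((Fin n → Bool) → Bool) → Prop
  | 0, f => Uwins 0 f true
  | 1, f => Uwins 1 f true ∧ ∀ (_ : Fin 1) (_ : Bool), False
  | n + 2, f => Uwins (n + 2) f true ∧
      ∀ (i : Fin (n + 2)) (b : Bool), ∃ (j : Fin (n + 1)) (c : Bool),
        ZeroGame n (opt j c (opt i b f))

theorem zeroGame_U2_aux : ∀ (n : ℕ) (f : (Fin n → Bool) → Bool),
    ZeroGame n f → Uwins n f false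
  | 0, f, h => h
  | 1, _, h => absurd (h.2 0 true) id
  | n + 2, f, h => fun i b => by
    obtain ⟨j, c, hz⟩ := h.2 i b
    exact ⟨j, c, zeroGame_U2_aux n _ hz⟩

/-- Every zero game is a win for the Unknotter moving second. -/
theorem zeroGame_U2 (n : ℕ) (f : (Fin n → Bool) → Bool) (h : ZeroGame n f) :
    Uwins n f false := zeroGame_U2_aux n f h
end

section
/- If P is a zero game, then for any position A, the connected sum A # P has the same outcome class as A (where outcome class records which of the two players wins for each choice of first player). -/
/-- Connected sum: disjoint union of crossings, conjunction of win predicates. -/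
def csum (m n : ℕ) (f : (Fin m → Bool) → Bool) (g : (Fin n → Bool) → Bool) :
    (Fin (m + n) → Bool) → Bool :=
  fun h => f (fun i => h (i.castAdd n)) && g (fun j => h (j.natAdd m))


/-- Resolve a crossing in the abstract (type-based) game. -/
def Opt {α : Type} [DecidableEq α] (a : α) (b : Bool)
    (f : (α → Bool) → Bool) : ({x : α // x ≠ a} → Bool) → Bool :=
  fun g => f (fun x => if h : x = a then b else g ⟨x, h⟩)

/-- Fuel-based winning predicate for the unknotter. -/
def UWn : ℕ → (α : Type) → [DecidableEq α] → ((α → Bool) → Bool) → Bool → Prop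
  | 0, _, _, f, _ => ∀ v, f v = true
  | k + 1, α, _, f, true => ∃ (a : α) (b : Bool), UWn k {x // x ≠ a} (Opt a b f) false
  | k + 1, α, _, f, false => ∀ (a : α) (b : Bool), UWn k {x // x ≠ a} (Opt a b f) true

def UW (α : Type) [Fintype α] [DecidableEq α] (f : (α → Bool) → Bool) (t : Bool) : Prop :=
  UWn (Fintype.card α) α f t

lemma card_ne {α : Type} [Fintype α] [DecidableEq α] (a : α) :
    Fintype.card {x // x ≠ a} = Fintype.card α - 1 := by
  simp [Fintype.card_subtype_compl, Fintype.card_subtype_eq]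

lemma UW_empty {α : Type} [Fintype α] [DecidableEq α] [IsEmpty α]
    (f : (α → Bool) → Bool) (t : Bool) :
    UW α f t ↔ f (fun a => isEmptyElim a) = true := by
  have hc : Fintype.card α = 0 := Fintype.card_eq_zero
  have hsub : ∀ v w : α → Bool, v = w := fun v w => funext fun a => isEmptyElim a
  unfold UW; rw [hc]
  constructor
  · intro h; exact h _
  · intro h v; rwa [hsub v (fun a => isEmptyElim a)]

lemma UW_succ_true {α : Type} [Fintype α] [DecidableEq α]
    (f : (α → Bool) → Bool) (h : 0 < Fintype.card α) :
    UW α f true ↔ ∃ (a : α) (b : Bool), UW {x // x ≠ a} (Opt a b f) false := by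
  obtain ⟨k, hk⟩ : ∃ k, Fintype.card α = k + 1 := ⟨_, (Nat.succ_pred_eq_of_pos h).symm⟩
  unfold UW; rw [hk]
  show (∃ a b, UWn k _ _ false) ↔ _
  have : ∀ a : α, Fintype.card {x // x ≠ a} = k := fun a => by rw [card_ne, hk]; rfl
  exact exists_congr fun a => by rw [this a]

lemma UW_succ_false {α : Type} [Fintype α] [DecidableEq α]
    (f : (α → Bool) → Bool) (h : 0 < Fintype.card α) :
    UW α f false ↔ ∀ (a : α) (b : Bool), UW {x // x ≠ a} (Opt a b f) true := by
  obtain ⟨k, hk⟩ : ∃ k, Fintype.card α = k + 1 := ⟨_, (Nat.succ_pred_eq_of_pos h).symm⟩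
  unfold UW; rw [hk]
  show (∀ a b, UWn k _ _ true) ↔ _
  have : ∀ a : α, Fintype.card {x // x ≠ a} = k := fun a => by rw [card_ne, hk]; rfl
  exact forall_congr' fun a => by rw [this a]

/-- Reindex a position along an equivalence. -/
def re {α β : Type} (e : α ≃ β) (f : (α → Bool) → Bool) : (β → Bool) → Bool :=
  fun v => f (fun a => v (e a))

def eqv {α β : Type} (e : α ≃ β) (a : α) : {x // x ≠ a} ≃ {y // y ≠ e a} :=
  e.subtypeEquiv fun x => (not_congr e.apply_eq_iff_eq).symm

lemma Opt_re {α β : Type} [DecidableEq α] [DecidableEq β] (e : α ≃ β) (a : α) (b : Bool)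
    (f : (α → Bool) → Bool) :
    Opt (e a) b (re e f) = re (eqv e a) (Opt a b f) := by
  funext v
  show f _ = f _
  congr 1
  funext x
  by_cases h : x = a
  · subst h; simp
  · dsimp only
    rw [dif_neg h, dif_neg (fun hh : e x = e a => h (e.injective hh))]
    rfl

lemma UW_re_aux : ∀ (n : ℕ) (α β : Type) [Fintype α] [DecidableEq α] [Fintype β]
    [DecidableEq β], Fintype.card α = n → ∀ (e : α ≃ β) (f : (α → Bool) → Bool) (t : Bool),
    UW β (re e f) t ↔ UW α f t := by
  intro n
  induction n using Nat.strong_induction_on with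
  | _ n ih =>
    intro α β _ _ _ _ hn e f t
    have hcb : Fintype.card β = n := by rw [← Fintype.card_congr e, hn]
    match n, hn, hcb with
    | 0, hn, hcb =>
      have : IsEmpty α := Fintype.card_eq_zero_iff.mp hn
      have : IsEmpty β := Fintype.card_eq_zero_iff.mp hcb
      rw [UW_empty, UW_empty]
      show f _ = true ↔ f _ = true
      rw [show (fun a : α => (fun b : β => (isEmptyElim b : Bool)) (e a)) = fun a => isEmptyElim a
        from funext fun a => isEmptyElim a]
    | (k+1), hn, hcb =>
      have key : ∀ (a : α) (b : Bool) (s : Bool),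
          UW {y // y ≠ e a} (Opt (e a) b (re e f)) s ↔ UW {x // x ≠ a} (Opt a b f) s := by
        intro a b s
        rw [Opt_re]
        exact ih (Fintype.card {x // x ≠ a}) (by rw [card_ne, hn]; omega) _ _ rfl _ _ _
      cases t with
      | true =>
        rw [UW_succ_true _ (by omega), UW_succ_true _ (by omega)]
        constructor
        · rintro ⟨y, b, h⟩
          refine ⟨e.symm y, b, ?_⟩
          rw [← Equiv.apply_symm_apply e y] at h
          exact (key _ _ _).mp h
        · rintro ⟨a, b, h⟩
          exact ⟨e a, b, (key _ _ _).mpr h⟩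
      | false =>
        rw [UW_succ_false _ (by omega), UW_succ_false _ (by omega)]
        constructor
        · intro h a b
          exact (key _ _ _).mp (h (e a) b)
        · intro h y b
          have := (key (e.symm y) b _).mpr (h (e.symm y) b)
          rwa [Equiv.apply_symm_apply] at this
      
lemma UW_re {α β : Type} [Fintype α] [DecidableEq α] [Fintype β] [DecidableEq β]
    (e : α ≃ β) (f : (α → Bool) → Bool) (t : Bool) :
    UW β (re e f) t ↔ UW α f t :=
  UW_re_aux _ α β rfl e f t

/-- Zero game (type-based). -/
def ZG (α : Type) [Fintype α] [DecidableEq α] (g : (α → Bool) → Bool) : Prop :=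
  UW α g true ∧ ∀ (p : α) (b : Bool), ∃ (q : {y // y ≠ p}) (c : Bool),
    ZG {y' : {y // y ≠ p} // y' ≠ q} (Opt q c (Opt p b g))
termination_by Fintype.card α
decreasing_by
  exact lt_trans (Fintype.card_subtype_lt (x := q) (by simp))
    (Fintype.card_subtype_lt (x := p) (by simp))

lemma ZG_def {α : Type} [Fintype α] [DecidableEq α] (g : (α → Bool) → Bool) :
    ZG α g ↔ UW α g true ∧ ∀ (p : α) (b : Bool), ∃ (q : {y // y ≠ p}) (c : Bool),
      ZG {y' : {y // y ≠ p} // y' ≠ q} (Opt q c (Opt p b g)) := by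
  rw [ZG]

lemma ZG_re_aux : ∀ (n : ℕ) (α β : Type) [Fintype α] [DecidableEq α] [Fintype β]
    [DecidableEq β], Fintype.card α = n → ∀ (e : α ≃ β) (g : (α → Bool) → Bool),
    ZG β (re e g) ↔ ZG α g := by
  intro n
  induction n using Nat.strong_induction_on with
  | _ n ih =>
    intro α β _ _ _ _ hn e g
    rw [ZG_def, ZG_def]
    refine and_congr (UW_re e g true) ?_
    constructor
    · intro h a b
      obtain ⟨q, c, hz⟩ := h (e a) b
      rw [Opt_re] at hz
      set q' := (eqv e a).symm q with hq'
      rw [← Equiv.apply_symm_apply (eqv e a) q] at hz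
      rw [Opt_re] at hz
      refine ⟨q', c, ?_⟩
      exact (ih (Fintype.card {y' : {y // y ≠ a} // y' ≠ q'}) (by
        rw [← hn]
        exact lt_trans (Fintype.card_subtype_lt (x := q') (by simp))
          (Fintype.card_subtype_lt (x := a) (by simp))) _ _ rfl _ _).mp hz
    · intro h p b
      obtain ⟨a, rfl⟩ := e.surjective p
      obtain ⟨q, c, hz⟩ := h a b
      refine ⟨eqv e a q, c, ?_⟩
      rw [Opt_re, Opt_re]
      exact (ih (Fintype.card {y' : {y // y ≠ a} // y' ≠ q}) (by
        rw [← hn]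
        exact lt_trans (Fintype.card_subtype_lt (x := q) (by simp))
          (Fintype.card_subtype_lt (x := a) (by simp))) _ _ rfl _ _).mpr hz

lemma ZG_re {α β : Type} [Fintype α] [DecidableEq α] [Fintype β] [DecidableEq β]
    (e : α ≃ β) (g : (α → Bool) → Bool) : ZG β (re e g) ↔ ZG α g :=
  ZG_re_aux _ α β rfl e g

lemma ZG_UW_false_aux : ∀ (n : ℕ) (α : Type) [Fintype α] [DecidableEq α],
    Fintype.card α = n → ∀ (g : (α → Bool) → Bool), ZG α g → UW α g false := by
  intro n
  induction n using Nat.strong_induction_on with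
  | _ n ih =>
    intro α _ _ hn g hg
    rw [ZG_def] at hg
    rcases Nat.eq_zero_or_pos n with h0 | hpos
    · subst h0
      have : IsEmpty α := Fintype.card_eq_zero_iff.mp hn
      rw [UW_empty]
      exact (UW_empty g true).mp hg.1
    · rw [UW_succ_false _ (by omega)]
      intro p b
      obtain ⟨q, c, hz⟩ := hg.2 p b
      have hqpos : 0 < Fintype.card {y // y ≠ p} := Fintype.card_pos_iff.mpr ⟨q⟩
      rw [UW_succ_true _ hqpos]
      refine ⟨q, c, ?_⟩
      have hlt : Fintype.card {y' : {y // y ≠ p} // y' ≠ q} < n := by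
        rw [← hn]
        exact lt_trans (Fintype.card_subtype_lt (x := q) (by simp))
          (Fintype.card_subtype_lt (x := p) (by simp))
      exact ih _ hlt _ rfl _ hz

lemma UW_of_const_false_aux : ∀ (n : ℕ) (α : Type) [Fintype α] [DecidableEq α],
    Fintype.card α = n → ∀ (f : (α → Bool) → Bool), (∀ v, f v = false) →
    ∀ t, ¬ UW α f t := by
  intro n
  induction n using Nat.strong_induction_on with
  | _ n ih =>
    intro α _ _ hn f hf t
    rcases Nat.eq_zero_or_pos n with h0 | hpos
    · subst h0
      have : IsEmpty α := Fintype.card_eq_zero_iff.mp hn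
      rw [UW_empty]
      simp [hf]
    · have hne : Nonempty α := Fintype.card_pos_iff.mp (by omega)
      obtain ⟨a⟩ := hne
      have hOpt : ∀ (b : Bool) (v : _), Opt a b f v = false := fun b v => hf _
      have hlt : Fintype.card {x // x ≠ a} < n := by
        rw [← hn]; exact Fintype.card_subtype_lt (x := a) (by simp)
      cases t with
      | true =>
        rw [UW_succ_true _ (by omega)]
        rintro ⟨a', b, h⟩
        have hOpt' : ∀ v, Opt a' b f v = false := fun v => hf _
        exact ih _ (by rw [← hn]; exact Fintype.card_subtype_lt (x := a') (by simp))
          _ rfl _ hOpt' _ h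
      | false =>
        rw [UW_succ_false _ (by omega)]
        intro h
        exact ih _ hlt _ rfl _ (hOpt true) _ (h a true)

/-- Connected sum (type-based). -/
def sumf {α β : Type} (f : (α → Bool) → Bool) (g : (β → Bool) → Bool) :
    (α ⊕ β → Bool) → Bool :=
  fun v => f (fun a => v (.inl a)) && g (fun b => v (.inr b))

def eA {α β : Type} (a : α) : ({x : α // x ≠ a} ⊕ β) ≃ {z : α ⊕ β // z ≠ .inl a} where
  toFun w := w.elim (fun x => ⟨.inl x.1, by simp [x.2]⟩) (fun y => ⟨.inr y, by simp⟩)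
  invFun z := match z with
    | ⟨.inl x, h⟩ => .inl ⟨x, fun hh => h (by rw [hh])⟩
    | ⟨.inr y, _⟩ => .inr y
  left_inv w := by rcases w with ⟨x, h⟩ | y <;> rfl
  right_inv z := by rcases z with ⟨x | y, h⟩ <;> rfl

def eB {α β : Type} (p : β) : (α ⊕ {y : β // y ≠ p}) ≃ {z : α ⊕ β // z ≠ .inr p} where
  toFun w := w.elim (fun x => ⟨.inl x, by simp⟩) (fun y => ⟨.inr y.1, by simp [y.2]⟩)
  invFun z := match z with
    | ⟨.inl x, _⟩ => .inl x
    | ⟨.inr y, h⟩ => .inr ⟨y, fun hh => h (by rw [hh])⟩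
  left_inv w := by rcases w with x | ⟨y, h⟩ <;> rfl
  right_inv z := by rcases z with ⟨x | y, h⟩ <;> rfl

lemma sumf_optA {α β : Type} [DecidableEq α] [DecidableEq β] (a : α) (b : Bool)
    (f : (α → Bool) → Bool) (g : (β → Bool) → Bool) :
    Opt (Sum.inl a) b (sumf f g) = re (eA a) (sumf (Opt a b f) g) := by
  funext v
  show (f _ && g _) = (f _ && g _)
  congr 1
  congr 1
  funext x
  by_cases h : x = a
  · subst h; simp
  · dsimp only
    rw [dif_neg h, dif_neg (fun hh : Sum.inl x = Sum.inl a => h (Sum.inl.inj hh))]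
    rfl

lemma sumf_optB {α β : Type} [DecidableEq α] [DecidableEq β] (p : β) (b : Bool)
    (f : (α → Bool) → Bool) (g : (β → Bool) → Bool) :
    Opt (Sum.inr p) b (sumf f g) = re (eB p) (sumf f (Opt p b g)) := by
  funext v
  show (f _ && g _) = (f _ && g _)
  congr 1
  congr 1
  funext y
  by_cases h : y = p
  · subst h; simp
  · dsimp only
    rw [dif_neg h, dif_neg (fun hh : Sum.inr y = Sum.inr p => h (Sum.inr.inj hh))]
    rfl

def eEmpty (α β : Type) [IsEmpty α] : β ≃ α ⊕ β where
  toFun := Sum.inr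
  invFun z := z.elim (fun a => isEmptyElim a) id
  left_inv b := rfl
  right_inv z := by
    rcases z with a | b
    · exact isEmptyElim a
    · rfl

lemma sumf_empty {α β : Type} [IsEmpty α] (f : (α → Bool) → Bool) (g : (β → Bool) → Bool) :
    sumf f g = re (eEmpty α β) (fun w => f (fun a => isEmptyElim a) && g w) := by
  funext v
  show (f _ && g _) = (f _ && g _)
  congr 1
  congr 1
  funext a
  exact isEmptyElim a

lemma main_aux : ∀ (N : ℕ) (α β : Type) [Fintype α] [DecidableEq α] [Fintype β]
    [DecidableEq β] (f : (α → Bool) → Bool) (g : (β → Bool) → Bool),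
    Fintype.card α + Fintype.card β = N → ZG β g → ∀ t,
    (UW (α ⊕ β) (sumf f g) t ↔ UW α f t) := by
  intro N
  induction N using Nat.strong_induction_on with
  | _ N ih =>
    intro α β _ _ _ _ f g hN hg t
    rcases isEmpty_or_nonempty α with hα | hα
    · have h1 : UW (α ⊕ β) (sumf f g) t ↔
          UW β (fun w => f (fun a => isEmptyElim a) && g w) t := by
        rw [sumf_empty]; exact UW_re _ _ _
      rw [h1, UW_empty f t]
      by_cases hfb : f (fun a => isEmptyElim a) = true
      · have hG : (fun w => f (fun a => isEmptyElim a) && g w) = g := by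
          funext w; rw [hfb, Bool.true_and]
        rw [hG, hfb]
        refine iff_of_true ?_ rfl
        cases t with
        | false => exact ZG_UW_false_aux _ β rfl g hg
        | true => exact ((ZG_def g).mp hg).1
      · have hfb' : f (fun a => isEmptyElim a) = false := by
          cases h : f (fun a => isEmptyElim a)
          · rfl
          · exact absurd h hfb
        have hG : ∀ v, (fun w => f (fun a => isEmptyElim a) && g w) v = false := by
          intro v; dsimp only; rw [hfb', Bool.false_and]
        exact iff_of_false (UW_of_const_false_aux _ β rfl _ hG t) hfb
    · have hca : 0 < Fintype.card α := Fintype.card_pos_iff.mpr hα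
      have hcs : 0 < Fintype.card (α ⊕ β) := by rw [Fintype.card_sum]; omega
      have hlt1 : ∀ a : α, Fintype.card {x // x ≠ a} + Fintype.card β < N := fun a => by
        rw [card_ne]
        omega
      have keyA : ∀ (a : α) (b : Bool) (s : Bool),
          UW {z : α ⊕ β // z ≠ Sum.inl a} (Opt (Sum.inl a) b (sumf f g)) s ↔
          UW {x // x ≠ a} (Opt a b f) s := by
        intro a b s
        rw [sumf_optA, UW_re]
        exact ih _ (hlt1 a) _ _ _ _ rfl hg s
      have keyB : ∀ (p : β) (b : Bool) (s : Bool),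
          UW {z : α ⊕ β // z ≠ Sum.inr p} (Opt (Sum.inr p) b (sumf f g)) s ↔
          UW (α ⊕ {y // y ≠ p}) (sumf f (Opt p b g)) s := by
        intro p b s
        rw [sumf_optB]
        exact UW_re _ _ _
      have hlt2 : ∀ (p : β) (q : {y // y ≠ p}),
          Fintype.card α + Fintype.card {y' : {y // y ≠ p} // y' ≠ q} < N := fun p q => by
        have hb : 0 < Fintype.card β := Fintype.card_pos_iff.mpr ⟨p⟩
        rw [card_ne, card_ne]
        omega
      cases t with
      | true =>
        constructor
        · intro h
          rw [UW_succ_true _ hcs] at h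
          obtain ⟨z, b, hz⟩ := h
          rcases z with a | p
          · rw [keyA] at hz
            rw [UW_succ_true _ hca]
            exact ⟨a, b, hz⟩
          · rw [keyB] at hz
            obtain ⟨q, c, hZG⟩ := ((ZG_def g).mp hg).2 p b
            rw [UW_succ_false _ (by rw [Fintype.card_sum]; omega)] at hz
            have h2 := hz (Sum.inr q) c
            rw [sumf_optB, UW_re] at h2
            exact (ih _ (hlt2 p q) _ _ _ _ rfl hZG true).mp h2
        · intro h
          rw [UW_succ_true _ hca] at h
          obtain ⟨a, b, hz⟩ := h
          rw [UW_succ_true _ hcs]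
          exact ⟨Sum.inl a, b, (keyA a b false).mpr hz⟩
      | false =>
        constructor
        · intro h
          rw [UW_succ_false _ hca]
          intro a b
          rw [UW_succ_false _ hcs] at h
          have := h (Sum.inl a) b
          rwa [keyA] at this
        · intro h
          rw [UW_succ_false _ hcs]
          rintro (a | p) b
          · rw [keyA]
            rw [UW_succ_false _ hca] at h
            exact h a b
          · rw [keyB]
            obtain ⟨q, c, hZG⟩ := ((ZG_def g).mp hg).2 p b
            rw [UW_succ_true _ (Fintype.card_pos_iff.mpr ⟨Sum.inr q⟩)]
            refine ⟨Sum.inr q, c, ?_⟩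
            rw [sumf_optB, UW_re]
            exact (ih _ (hlt2 p q) _ _ _ _ rfl hZG false).mpr h

noncomputable def eFin {n : ℕ} (i : Fin (n + 1)) : Fin n ≃ {x : Fin (n + 1) // x ≠ i} :=
  Equiv.ofBijective (fun j => ⟨i.succAbove j, Fin.succAbove_ne i j⟩)
    ⟨fun j k h => Fin.succAbove_right_injective (congrArg Subtype.val h),
     fun x => by
      obtain ⟨j, hj⟩ := Fin.exists_succAbove_eq x.2
      exact ⟨j, Subtype.ext hj⟩⟩

lemma opt_eq {n : ℕ} (i : Fin (n + 1)) (b : Bool) (f : (Fin (n + 1) → Bool) → Bool) :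
    Opt i b f = re (eFin i) (opt i b f) := by
  funext v
  show f _ = f _
  congr 1
  funext x
  rcases eq_or_ne x i with rfl | h
  · simp
  · obtain ⟨j, rfl⟩ := Fin.exists_succAbove_eq h
    rw [dif_neg h, Fin.insertNth_apply_succAbove]
    rfl

lemma UW_fin : ∀ (n : ℕ) (f : (Fin n → Bool) → Bool) (t : Bool),
    Uwins n f t ↔ UW (Fin n) f t := by
  intro n
  induction n with
  | zero =>
    intro f t
    rw [UW_empty]
    show f _ = true ↔ f _ = true
    rw [show (fun i : Fin 0 => i.elim0) = (fun a : Fin 0 => (isEmptyElim a : Bool)) from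
      funext fun a => isEmptyElim a]
  | succ n ihn =>
    intro f t
    have hpos : 0 < Fintype.card (Fin (n + 1)) := by simp
    have key : ∀ (i : Fin (n + 1)) (b : Bool) (s : Bool),
        UW {x // x ≠ i} (Opt i b f) s ↔ Uwins n (opt i b f) s := by
      intro i b s
      rw [opt_eq, UW_re, ← ihn]
    cases t with
    | true =>
      rw [UW_succ_true _ hpos]
      show (∃ i b, Uwins n (opt i b f) false) ↔ _
      exact exists_congr fun i => exists_congr fun b => (key i b false).symm
    | false =>
      rw [UW_succ_false _ hpos]
      show (∀ i b, Uwins n (opt i b f) true) ↔ _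
      exact forall_congr' fun i => forall_congr' fun b => (key i b true).symm

lemma ZG_fin : ∀ (n : ℕ) (g : (Fin n → Bool) → Bool), ZeroGame n g → ZG (Fin n) g := by
  intro n
  induction n using Nat.strong_induction_on with
  | _ n ih =>
    match n with
    | 0 =>
      intro g hg
      rw [ZG_def]
      exact ⟨(UW_fin 0 g true).mp hg, fun p => p.elim0⟩
    | 1 =>
      intro g hg
      exact (hg.2 0 true).elim
    | (n + 2) =>
      intro g hg
      rw [ZG_def]
      refine ⟨(UW_fin _ g true).mp hg.1, ?_⟩
      intro p b
      obtain ⟨j, c, hz⟩ := hg.2 p b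
      refine ⟨eFin p j, c, ?_⟩
      rw [opt_eq p b g, Opt_re, ZG_re, opt_eq j c (opt p b g), ZG_re]
      exact ih n (by omega) _ hz


lemma Kwins_iff : ∀ (n : ℕ) (f : (Fin n → Bool) → Bool) (t : Bool),
    Kwins n f t ↔ ¬ Uwins n f (!t) := by
  intro n
  induction n with
  | zero =>
    intro f t
    show f _ = false ↔ ¬ f _ = true
    cases h : f (fun i => i.elim0) <;> simp
  | succ n ihn =>
    intro f t
    cases t with
    | true =>
      show (∃ i b, Kwins n (opt i b f) false) ↔ ¬ ∀ i b, Uwins n (opt i b f) true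
      push_neg
      exact exists_congr fun i => exists_congr fun b => ihn (opt i b f) false
    | false =>
      show (∀ i b, Kwins n (opt i b f) true) ↔ ¬ ∃ i b, Uwins n (opt i b f) false
      push_neg
      exact forall_congr' fun i => forall_congr' fun b => ihn (opt i b f) true

lemma csum_eq_re (m n : ℕ) (f : (Fin m → Bool) → Bool) (g : (Fin n → Bool) → Bool) :
    csum m n f g = re finSumFinEquiv (sumf f g) := by
  funext h
  show (f _ && g _) = (f _ && g _)
  congr 1

lemma uwins_csum (m n : ℕ) (f : (Fin m → Bool) → Bool) (g : (Fin n → Bool) → Bool)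
    (hg : ZeroGame n g) (t : Bool) :
    Uwins (m + n) (csum m n f g) t ↔ Uwins m f t := by
  rw [UW_fin, UW_fin, csum_eq_re, UW_re]
  exact main_aux _ _ _ f g rfl (ZG_fin n g hg) t

/-- Adding a zero game does not change the outcome class. -/
theorem csum_zeroGame_outcome (m n : ℕ) (f : (Fin m → Bool) → Bool)
    (g : (Fin n → Bool) → Bool) (hg : ZeroGame n g) :
    (Uwins (m + n) (csum m n f g) true ↔ Uwins m f true) ∧
    (Uwins (m + n) (csum m n f g) false ↔ Uwins m f false) ∧
    (Kwins (m + n) (csum m n f g) true ↔ Kwins m f true) ∧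
    (Kwins (m + n) (csum m n f g) false ↔ Kwins m f false) := by
  refine ⟨uwins_csum m n f g hg true, uwins_csum m n f g hg false, ?_, ?_⟩
  · rw [Kwins_iff, Kwins_iff]
    exact not_congr (uwins_csum m n f g hg false)
  · rw [Kwins_iff, Kwins_iff]
    exact not_congr (uwins_csum m n f g hg true)
end

section
/- If the Unknotter wins P moving second, then the Unknotter wins P # * moving first; similarly, if the Knotter wins P moving second, then the Knotter wins P # * moving first. -/
/-- The position `*`: one unresolved crossing, both resolutions are unknots. -/
def star : (Fin 1 → Bool) → Bool := fun _ => true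

/-- If a player wins `P` moving second, that player wins `P # *` moving first. -/
theorem csum_star_first (n : ℕ) (f : (Fin n → Bool) → Bool) :
    (Uwins n f false → Uwins (n + 1) (csum n 1 f star) true) ∧
    (Kwins n f false → Kwins (n + 1) (csum n 1 f star) true) := by
  have key : opt (Fin.last n) true (csum n 1 f star) = f := by
    funext g
    show ((f fun i => (Fin.last n).insertNth (α := fun _ => Bool) true g (i.castAdd 1)) &&
        star fun j => (Fin.last n).insertNth (α := fun _ => Bool) true g (j.natAdd n)) = f g
    have : (fun i : Fin n => (Fin.last n).insertNth (α := fun _ => Bool) true g (i.castAdd 1)) = g := by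
      funext i
      have : (i.castAdd 1) = i.castSucc := rfl
      simp [this, Fin.insertNth_last, Fin.snoc_castSucc]
    rw [this]
    simp [_root_.star]
  exact ⟨fun h => ⟨Fin.last n, true, key.symm ▸ h⟩,
         fun h => ⟨Fin.last n, true, key.symm ▸ h⟩⟩
end

section
/- Suppose position P is obtained from position Q by adding two new crossings c1, c2 such that: for any total assignment in which c1 and c2 receive opposite values, the win predicate of P agrees with the win predicate of Q on the remaining crossings. If P and Q have an even number of unresolved crossings and the Unknotter wins Q moving second, then the Unknotter wins P moving second. If P and Q have an odd number of unresolved crossings and the Unknotter wins Q moving first, then the Unknotter wins P moving first. The same statements hold with 'Knotter' in place of 'Unknotter'. -/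
private lemma sa_val {m : ℕ} (p : Fin (m+1)) (i : Fin m) :
    (p.succAbove i : ℕ) = if (i:ℕ) < (p:ℕ) then (i:ℕ) else (i:ℕ)+1 := by
  rw [Fin.succAbove]; split_ifs with h1 h2 h2 <;> simp_all [Fin.lt_def]

private lemma sa_sa {n : ℕ} (m i : Fin (n+2)) (j : Fin (n+1)) (p : Fin (n+1))
    (hm : m = i.succAbove j) (hp : m.succAbove p = i) (k : Fin n) :
    m.succAbove (p.succAbove k) = i.succAbove (j.succAbove k) := by
  have h0 := congrArg Fin.val hp
  have h1 := congrArg Fin.val hm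
  have hi := i.isLt; have hj := j.isLt; have hp' := p.isLt; have hk := k.isLt
  apply Fin.val_injective
  simp only [sa_val] at h0 h1 ⊢
  split_ifs at h0 h1 ⊢ <;> omega

private lemma insertNth_swap {n : ℕ} (m i : Fin (n+2)) (j p : Fin (n+1))
    (hm : m = i.succAbove j) (hp : m.succAbove p = i) (x y : Bool) (g : Fin n → Bool) :
    i.insertNth x (j.insertNth y g) =
      Fin.insertNth (α := fun _ => Bool) m y (Fin.insertNth (α := fun _ => Bool) p x g) := by
  funext z
  by_cases hz1 : z = i
  · subst hz1
    rw [Fin.insertNth_apply_same, ← hp, Fin.insertNth_apply_succAbove,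
      Fin.insertNth_apply_same]
  · by_cases hz2 : z = m
    · subst hz2
      rw [Fin.insertNth_apply_same, hm, Fin.insertNth_apply_succAbove,
        Fin.insertNth_apply_same]
    · obtain ⟨w, hw⟩ := Fin.exists_succAbove_eq hz1
      have hwj : w ≠ j := by
        intro h; apply hz2; rw [← hw, h, hm]
      obtain ⟨k, hk⟩ := Fin.exists_succAbove_eq hwj
      rw [← hw, ← hk, Fin.insertNth_apply_succAbove, Fin.insertNth_apply_succAbove,
        ← sa_sa m i j p hm hp k, Fin.insertNth_apply_succAbove, Fin.insertNth_apply_succAbove]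

private lemma pair_step {n' : ℕ} (f : (Fin (n'+1) → Bool) → Bool)
    (F : (Fin (n'+3) → Bool) → Bool)
    (i : Fin (n'+3)) (j : Fin (n'+2))
    (hyp : ∀ b g, F (i.insertNth b (j.insertNth (!b) g)) = f g)
    (k : Fin (n'+1)) (c : Bool) (i' : Fin (n'+3)) (hi' : i' = i.succAbove (j.succAbove k))
    (p₂ : Fin (n'+2)) (hp₂ : i'.succAbove p₂ = i)
    (p₁ : Fin (n'+1)) (hp₁ : (j.succAbove k).succAbove p₁ = j) :
    ∀ b g, (opt i' c F) (p₂.insertNth b (p₁.insertNth (!b) g)) = (opt k c f) g := by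
  intro b g
  show F (i'.insertNth c (p₂.insertNth b (p₁.insertNth (!b) g))) = f (k.insertNth c g)
  have e1 := insertNth_swap (j.succAbove k) j k p₁ rfl hp₁ (!b) c g
  have e2 := insertNth_swap i' i (j.succAbove k) p₂ hi' hp₂ b c (p₁.insertNth (!b) g)
  rw [← e2, ← e1, hyp b (k.insertNth c g)]

private lemma keyU : ∀ (n : ℕ) (f : (Fin n → Bool) → Bool) (F : (Fin (n+2) → Bool) → Bool)
    (i : Fin (n+2)) (j : Fin (n+1)),
    (∀ b g, F (i.insertNth b (j.insertNth (!b) g)) = f g) →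
    (Even n → Uwins n f false → Uwins (n+2) F false) ∧
    (Odd n → Uwins n f true → Uwins (n+2) F true) := by
  intro n
  induction n using Nat.strong_induction_on with
  | _ n IH =>
  intro f F i j hyp
  constructor
  · intro hev hU
    intro i' c
    by_cases h1 : i' = i
    · subst h1
      have he : opt j (!c) (opt i' c F) = f := by funext g; exact hyp c g
      exact ⟨j, !c, he ▸ hU⟩
    · by_cases h2 : i' = i.succAbove j
      · obtain ⟨p, hp⟩ := Fin.exists_succAbove_eq (Ne.symm h1)
        have he : opt p (!c) (opt i' c F) = f := by
          funext g
          show F (i'.insertNth c (p.insertNth (!c) g)) = f g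
          rw [← insertNth_swap i' i j p h2 hp (!c) c g]
          have h := hyp (!c) g; rwa [Bool.not_not] at h
        exact ⟨p, !c, he ▸ hU⟩
      · obtain ⟨w, hw⟩ := Fin.exists_succAbove_eq h1
        have hwj : w ≠ j := by
          intro h; apply h2; rw [← hw, h]
        obtain ⟨k, hk⟩ := Fin.exists_succAbove_eq hwj
        cases n with
        | zero => exact k.elim0
        | succ n' =>
          obtain ⟨p₁, hp₁⟩ := Fin.exists_succAbove_eq (Fin.succAbove_ne j k).symm
          obtain ⟨p₂, hp₂⟩ := Fin.exists_succAbove_eq (Ne.symm h1)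
          have hi' : i' = i.succAbove (j.succAbove k) := by rw [← hw, hk]
          have hyp' := pair_step f F i j hyp k c i' hi' p₂ hp₂ p₁ hp₁
          have hodd : Odd n' := Nat.not_even_iff_odd.mp (Nat.even_add_one.mp hev)
          exact (IH n' (by omega) (opt k c f) (opt i' c F) p₂ p₁ hyp').2 hodd (hU k c)
  · intro hodd hU
    cases n with
    | zero => simp [Nat.odd_iff] at hodd
    | succ n' =>
      obtain ⟨k, c, hU'⟩ := hU
      refine ⟨i.succAbove (j.succAbove k), c, ?_⟩
      obtain ⟨p₁, hp₁⟩ := Fin.exists_succAbove_eq (Fin.succAbove_ne j k).symm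
      obtain ⟨p₂, hp₂⟩ := Fin.exists_succAbove_eq (Fin.succAbove_ne i (j.succAbove k)).symm
      have hyp' := pair_step f F i j hyp k c _ rfl p₂ hp₂ p₁ hp₁
      have hev : Even n' := by
        rcases Nat.even_or_odd n' with h | h
        · exact h
        · exact absurd hodd (by simp [Nat.even_add_one, ← Nat.not_even_iff_odd] at h ⊢; exact h)
      exact (IH n' (by omega) (opt k c f) _ p₂ p₁ hyp').1 hev hU'

private lemma K_iff_U : ∀ (n : ℕ) (f : (Fin n → Bool) → Bool) (t : Bool),
    Kwins n f t ↔ Uwins n (fun g => !(f g)) t := by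
  intro n
  induction n with
  | zero =>
    intro f t
    show f (fun i => i.elim0) = false ↔ (! f (fun i => i.elim0)) = true
    simp
  | succ n ih =>
    intro f t
    cases t
    · constructor <;> intro h i b
      · exact (ih (opt i b f) true).mp (h i b)
      · exact (ih (opt i b f) true).mpr (h i b)
    · constructor <;> rintro ⟨i, b, h⟩
      · exact ⟨i, b, (ih (opt i b f) false).mp h⟩
      · exact ⟨i, b, (ih (opt i b f) false).mpr h⟩

private lemma append_eq_snoc {n : ℕ} (g : Fin n → Bool) (x y : Bool) :
    Fin.append g ![x, y] = Fin.snoc (Fin.snoc g x) y := by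
  have h1 : (![x, y] : Fin 2 → Bool) = Fin.snoc ![x] y := by
    funext i; fin_cases i <;> simp [Fin.snoc]
  rw [h1, Fin.append_snoc, Fin.append_right_eq_snoc]
  simp

/-- Pseudo Reidemeister II: adding two crossings which cancel whenever they receive
opposite values does not hurt the player making the last move of the game. -/
theorem pseudoR2 (n : ℕ) (f : (Fin n → Bool) → Bool)
    (F : (Fin (n + 2) → Bool) → Bool)
    (hF : ∀ (g : Fin n → Bool) (b : Bool), F (Fin.append g ![b, !b]) = f g) :
    (Even n →
      (Uwins n f false → Uwins (n + 2) F false) ∧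
      (Kwins n f false → Kwins (n + 2) F false)) ∧
    (Odd n →
      (Uwins n f true → Uwins (n + 2) F true) ∧
      (Kwins n f true → Kwins (n + 2) F true)) := by
  have hyp : ∀ (G : (Fin (n + 2) → Bool) → Bool) (h : (Fin n → Bool) → Bool),
      (∀ (g : Fin n → Bool) (b : Bool), G (Fin.append g ![b, !b]) = h g) →
      ∀ b g, G ((Fin.last (n+1)).insertNth b ((Fin.last n).insertNth (!b) g)) = h g := by
    intro G h hG b g
    rw [Fin.insertNth_last', Fin.insertNth_last', ← append_eq_snoc g (!b) b]
    have h2 := hG g (!b); rwa [Bool.not_not] at h2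
  have hU := keyU n f F _ _ (hyp F f hF)
  have hK := keyU n (fun g => !(f g)) (fun h => !(F h)) (Fin.last (n+1)) (Fin.last n)
    (hyp (fun h => !(F h)) (fun g => !(f g)) (fun g b => by simp only [hF g b]))
  refine ⟨fun hev => ⟨hU.1 hev, fun h => ?_⟩, fun hodd => ⟨hU.2 hodd, fun h => ?_⟩⟩
  · exact (K_iff_U (n+2) F false).mpr (hK.1 hev ((K_iff_U n f false).mp h))
  · exact (K_iff_U (n+2) F true).mpr (hK.2 hodd ((K_iff_U n f true).mp h))
end

section
/- With cf defined by the state recursion (num, denom) ↦ (denom, num + denom·k) starting from (0,1), for every list l of integers, the second component of cf(l.reverse) equals the second component of cf(l). -/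
/-- Continued-fraction state computation: starting from `(num, denom)`,
each list entry `k` updates the state to `(denom, num + denom * k)`. -/
def cfAux : ℤ × ℤ → List ℤ → ℤ × ℤ
  | p, [] => p
  | p, k :: l => cfAux (p.2, p.1 + p.2 * k) l

/-- Continued-fraction evaluation of a rational tangle description, starting at `(0, 1)`. -/
def cf (l : List ℤ) : ℤ × ℤ := cfAux (0, 1) l

private def N (k : ℤ) : Matrix (Fin 2) (Fin 2) ℤ := !![0, 1; 1, k]

private lemma N_symm (k : ℤ) : Matrix.transpose (N k) = N k := by
  ext i j
  fin_cases i <;> fin_cases j <;> simp [N]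

private lemma cfAux_eq (l : List ℤ) : ∀ a b : ℤ,
    cfAux (a, b) l =
      (a * (l.map N).prod 0 0 + b * (l.map N).prod 1 0,
       a * (l.map N).prod 0 1 + b * (l.map N).prod 1 1) := by
  induction l with
  | nil => intro a b; simp [cfAux]
  | cons k l ih =>
    intro a b
    simp only [cfAux, List.map_cons, List.prod_cons]
    rw [ih]
    congr 1 <;> simp [N, Matrix.mul_apply, Fin.sum_univ_two, Matrix.cons_val_zero,
      Matrix.cons_val_one] <;> ring

private lemma cf_snd (l : List ℤ) : (cf l).2 = (l.map N).prod 1 1 := by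
  simp [cf, cfAux_eq]

theorem cf_reverse_snd (l : List ℤ) : (cf l.reverse).2 = (cf l).2 := by
  rw [cf_snd, cf_snd]
  have : (l.reverse.map N).prod = Matrix.transpose ((l.map N).prod) := by
    rw [Matrix.transpose_list_prod]
    simp only [List.map_map, List.map_reverse]
    rw [show Matrix.transpose ∘ N = N from funext N_symm]
  rw [this, Matrix.transpose_apply]
end

section
/- Consider the knotting-unknotting game on the shadow [(2),(2)]: there are 4 unresolved crossings grouped into two twist regions of size 2; players alternate, each move picking an unresolved crossing and assigning it +1 or −1; at the end, let a1 and a2 be the sums of the signs in the two regions, and the Unknotter wins iff |second component of cf([a1, a2])| = 1, where cf starts at (0,1) and updates (num, denom) to (denom, num + denom·k). Then whichever player moves second has a winning strategy. -/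
/-- The sign of a resolved crossing: `+1` or `-1`. -/
def sign (b : Bool) : ℤ := if b then 1 else -1


instance instDecUwins : (n : ℕ) → (f : (Fin n → Bool) → Bool) → (t : Bool) →
    Decidable (Uwins n f t)
  | 0, f, _ => inferInstanceAs (Decidable (_ = true))
  | n + 1, f, true =>
    have : ∀ i b, Decidable (Uwins n (opt i b f) false) :=
      fun i b => instDecUwins n (opt i b f) false
    inferInstanceAs (Decidable (∃ i b, Uwins n (opt i b f) false))
  | n + 1, f, false =>
    have : ∀ i b, Decidable (Uwins n (opt i b f) true) :=
      fun i b => instDecUwins n (opt i b f) true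
    inferInstanceAs (Decidable (∀ i b, Uwins n (opt i b f) true))

instance instDecKwins : (n : ℕ) → (f : (Fin n → Bool) → Bool) → (t : Bool) →
    Decidable (Kwins n f t)
  | 0, f, _ => inferInstanceAs (Decidable (_ = false))
  | n + 1, f, true =>
    have : ∀ i b, Decidable (Kwins n (opt i b f) false) :=
      fun i b => instDecKwins n (opt i b f) false
    inferInstanceAs (Decidable (∃ i b, Kwins n (opt i b f) false))
  | n + 1, f, false =>
    have : ∀ i b, Decidable (Kwins n (opt i b f) true) :=
      fun i b => instDecKwins n (opt i b f) true
    inferInstanceAs (Decidable (∀ i b, Kwins n (opt i b f) true))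

/-- The shadow [(2),(2)]: whichever player moves second wins. -/
theorem shadow_22_second_player_wins :
    Uwins 4 (fun g => decide
      (|(cf [sign (g 0) + sign (g 1), sign (g 2) + sign (g 3)]).2| = 1)) false ∧
    Kwins 4 (fun g => decide
      (|(cf [sign (g 0) + sign (g 1), sign (g 2) + sign (g 3)]).2| = 1)) false := by decide
end

section
/- Consider the knotting-unknotting game on the shadow [(0),(1),(2),(2)]: 5 unresolved crossings distributed into twist regions of sizes 0, 1, 2, 2; players alternate assigning each crossing a sign ±1; at the end, with a_i the sum of signs in region i, the Unknotter wins iff |second component of cf([a1, a2, a3, a4])| = 1, where cf starts at (0,1) and updates (num, denom) to (denom, num + denom·k). Then whichever player moves first has a winning strategy. -/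
instance decU : ∀ (n : ℕ) (f : (Fin n → Bool) → Bool) (t : Bool), Decidable (Uwins n f t)
  | 0, f, _ => by unfold Uwins; infer_instance
  | n + 1, f, true => by
      unfold Uwins
      have := fun i b => decU n (opt i b f) false
      infer_instance
  | n + 1, f, false => by
      unfold Uwins
      have := fun i b => decU n (opt i b f) true
      infer_instance

instance decK : ∀ (n : ℕ) (f : (Fin n → Bool) → Bool) (t : Bool), Decidable (Kwins n f t)
  | 0, f, _ => by unfold Kwins; infer_instance
  | n + 1, f, true => by
      unfold Kwins
      have := fun i b => decK n (opt i b f) false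
      infer_instance
  | n + 1, f, false => by
      unfold Kwins
      have := fun i b => decK n (opt i b f) true
      infer_instance

/-- The shadow [(0),(1),(2),(2)]: whichever player moves first wins. -/
theorem shadow_0122_first_player_wins :
    Uwins 5 (fun g => decide
      (|(cf [0, sign (g 0), sign (g 1) + sign (g 2), sign (g 3) + sign (g 4)]).2| = 1)) true ∧
    Kwins 5 (fun g => decide
      (|(cf [0, sign (g 0), sign (g 1) + sign (g 2), sign (g 3) + sign (g 4)]).2| = 1)) true := by constructor <;> decide
end

section
/- Consider the knotting-unknotting game on the shadow [(2),(1),(1),(2)]: 6 unresolved crossings in twist regions of sizes 2, 1, 1, 2; players alternately assign signs ±1 to crossings; with a_i the resulting twist sums, the Unknotter wins iff |second component of cf([a1, a2, a3, a4])| = 1, where cf starts at (0,1) and updates (num, denom) to (denom, num + denom·k). Then whichever player moves second has a winning strategy. -/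
instance Uwins.dec : ∀ (n : ℕ) (f : (Fin n → Bool) → Bool) (t : Bool), Decidable (Uwins n f t) := by
  intro n
  induction n with
  | zero => intro f t; unfold Uwins; infer_instance
  | succ n ih => intro f t; cases t <;> unfold Uwins <;> exact inferInstance

instance Kwins.dec : ∀ (n : ℕ) (f : (Fin n → Bool) → Bool) (t : Bool), Decidable (Kwins n f t) := by
  intro n
  induction n with
  | zero => intro f t; unfold Kwins; infer_instance
  | succ n ih => intro f t; cases t <;> unfold Kwins <;> exact inferInstance

set_option maxHeartbeats 10000000 in
/-- The shadow [(2),(1),(1),(2)]: whichever player moves second wins. -/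
theorem shadow_2112_second_player_wins :
    Uwins 6 (fun g => decide
      (|(cf [sign (g 0) + sign (g 1), sign (g 2), sign (g 3), sign (g 4) + sign (g 5)]).2| = 1)) false ∧
    Kwins 6 (fun g => decide
      (|(cf [sign (g 0) + sign (g 1), sign (g 2), sign (g 3), sign (g 4) + sign (g 5)]).2| = 1)) false := by
  constructor <;> decide
end
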